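/- arXiv:2501.13651 — 4 statements merged into one kernel-verified Lean document; each statement's English description precedes it below -/
import Mathlib

section
/- Let A be an abelian category admitting countable products, and let (J_s)_{s≥1} be a sequence of injective objects of A. Then the inverse system I_n := ∏_{s=1}^n J_s, with transition maps I_{n+1} → I_n the canonical projections, is an injective object of the abelian category of ℕ-indexed inverse systems in A (i.e., the functor category from ℕ^op to A). -/
/-!
A morphism of inverse systems `Y ⟶ prodSystem J` is the same as a family of maps
`Y(s+1) ⟶ J s`: its component at level `n` is recovered from these through the transition
maps of `Y`. Given a monomorphism `f : X ⟶ Y` and `g : X ⟶ prodSystem J`, each map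
`X(s+1) ⟶ J s` of `g` extends along `f.app (s+1)`, a monomorphism since monomorphisms of
functors are levelwise, by injectivity of `J s`; the extensions assemble to the required lift.
-/

open CategoryTheory CategoryTheory.Limits Opposite

variable {A : Type*} [Category A] [Abelian A] [HasCountableProducts A]

/-- The inverse system `n ↦ ∏_{s < n} J s` of finite products of the objects
`J s`, with transition maps the canonical projections, viewed as a functor
`ℕᵒᵖ ⥤ A`. -/
noncomputable def prodSystem (J : ℕ → A) : ℕᵒᵖ ⥤ A where
  obj n := ∏ᶜ (fun s : Fin n.unop => J s.1)
  map {n m} f :=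
    Pi.lift (fun s : Fin m.unop =>
      Pi.π (fun s : Fin n.unop => J s.1) (Fin.castLE (leOfHom f.unop) s))
  map_id n := by
    apply Pi.hom_ext
    intro s
    simp
  map_comp {n m k} f g := by
    apply Pi.hom_ext
    intro s
    simp
    rfl

namespace prodSystem

omit [Abelian A]

noncomputable def π (J : ℕ → A) (s : ℕ) : (prodSystem J).obj (op (s + 1)) ⟶ J s :=
  Pi.π (fun t : Fin (s + 1) => J t.1) (Fin.last s)

variable {J : ℕ → A}

lemma map_π {n s : ℕ} (h : s + 1 ≤ n) :
    (prodSystem J).map (homOfLE h).op ≫ π J s = Pi.π (fun t : Fin n => J t.1) ⟨s, h⟩ :=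
  Pi.lift_π _ _

noncomputable def lift {Y : ℕᵒᵖ ⥤ A} (φ : ∀ s, Y.obj (op (s + 1)) ⟶ J s) :
    Y ⟶ prodSystem J where
  app n := Pi.lift fun s : Fin n.unop => Y.map (homOfLE s.2).op ≫ φ s.1
  naturality n m u := Pi.hom_ext _ _ fun s => by
    simp only [prodSystem, Category.assoc, limit.lift_π, Fan.mk_π_app, ← Y.map_comp_assoc]
    rfl

@[simp]
lemma lift_app_π {Y : ℕᵒᵖ ⥤ A} (φ : ∀ s, Y.obj (op (s + 1)) ⟶ J s) (s : ℕ) :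
    (lift φ).app (op (s + 1)) ≫ π J s = φ s :=
  (Pi.lift_π _ _).trans (by simp)

lemma hom_ext {Y : ℕᵒᵖ ⥤ A} {g h : Y ⟶ prodSystem J}
    (w : ∀ s, g.app (op (s + 1)) ≫ π J s = h.app (op (s + 1)) ≫ π J s) : g = h := by
  refine NatTrans.ext (funext fun ⟨n⟩ => Pi.hom_ext _ _ fun s => ?_)
  have through_level : ∀ k : Y ⟶ prodSystem J, k.app (op n) ≫ Pi.π (fun t : Fin n => J t.1) s =
      Y.map (homOfLE s.2).op ≫ k.app (op (s + 1)) ≫ π J s := fun k => by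
    rw [k.naturality_assoc, map_π]
  exact (through_level g).trans (w s ▸ through_level h).symm

end prodSystem

/-- If each `J s` is injective, then the inverse system
`I_n = ∏_{s=1}^n J_s` (with projections as transition maps) is an injective
object of the abelian category of `ℕ`-indexed inverse systems in `A`,
i.e. of the functor category `ℕᵒᵖ ⥤ A`. -/
theorem stmt_1 (J : ℕ → A) (hJ : ∀ s, Injective (J s)) :
    Injective (prodSystem J) := by
  refine ⟨fun {X Y} g f _ => ?_⟩
  refine ⟨prodSystem.lift fun s =>
    Injective.factorThru (g.app (op (s + 1)) ≫ prodSystem.π J s) (f.app (op (s + 1))), ?_⟩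
  refine prodSystem.hom_ext fun s => ?_
  simp only [NatTrans.comp_app, Category.assoc, prodSystem.lift_app_π, Injective.comp_factorThru]
end

section
/- Let K be a field of characteristic zero, V a K-vector space, and N : V → V a nilpotent K-linear endomorphism. Let V[u] denote the K-vector space of polynomials in u with coefficients in V, and define D : V[u] → V[u] by D(∑_i v_i u^i) = ∑_i (N v_i) u^i + ∑_{i≥1} i·v_{i} u^{i-1}. Then the sequence 0 → V → V[u] → V[u] → 0 is exact, where the first map sends v to exp(−Nu)·v := ∑_{i≥0} ((−1)^i/i!) (N^i v) u^i (a finite sum by nilpotence) and the second map is D. In particular D is surjective and its kernel is exactly {exp(−Nu)·v : v ∈ V}. -/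
/-! In degree `i` the equation `D p = q` reads `(i + 1) p_{i+1} = q_i - N p_i`, so in characteristic
zero a solution is determined by `p_0` and can be built from any `p_0`. For `q = 0` and `p_0 = v`
the recursion produces exactly the coefficients `(-1)^i / i! • N^i v` of `exp(-Nu)·v`. For general
`q`, beyond the degree of `q` the recursion only multiplies by scalars and applies `N`, so by
nilpotence the solution starting from `p_0 = 0` is again a polynomial. -/

variable {K V : Type} [Field K] [CharZero K] [AddCommGroup V] [Module K V]

/-- The monodromy-type operator `D` on `V[u]` (modelled as `ℕ →₀ V`, the
coefficient of `u^i` being the value at `i`):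
`D(∑ v_i u^i) = ∑ (N v_i) u^i + ∑_{i ≥ 1} i · v_i u^{i-1}`, i.e. the
coefficient of `u^i` in `D p` is `N (p i) + (i+1) • p (i+1)`. -/
noncomputable def polyD (N : V →ₗ[K] V) (p : ℕ →₀ V) : ℕ →₀ V :=
  Finsupp.onFinset (p.support ∪ p.support.image (· - 1))
    (fun i => N (p i) + (i + 1) • p (i + 1))
    (fun i h => by
      by_cases h1 : p i = 0
      · have h2 : p (i + 1) ≠ 0 := by
          intro h2
          exact h (by simp [h1, h2])
        exact Finset.mem_union_right _
          (Finset.mem_image.mpr ⟨i + 1, Finsupp.mem_support_iff.mpr h2, by omega⟩)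
      · exact Finset.mem_union_left _ (Finsupp.mem_support_iff.mpr h1))

/-- The map `v ↦ exp(−Nu)·v = ∑_{i<m} ((−1)^i/i!) (N^i v) u^i ∈ V[u]`,
a finite sum since `N^m = 0`. -/
noncomputable def expNegNu (N : V →ₗ[K] V) (m : ℕ) (hm : N ^ m = 0) (v : V) :
    ℕ →₀ V :=
  Finsupp.onFinset (Finset.range m)
    (fun i => (((-1 : K) ^ i / i.factorial) • ((N ^ i) v)))
    (fun i hi =>
      Finset.mem_range.mpr (by
        by_contra hc
        push_neg at hc
        apply hi
        have hz : (N : V →ₗ[K] V) ^ i = 0 := by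
          rw [show i = (i - m) + m by omega, pow_add, hm, mul_zero]
        simp [hz]))

omit [CharZero K] in
theorem polyD_apply (N : V →ₗ[K] V) (p : ℕ →₀ V) (i : ℕ) :
    polyD N p i = N (p i) + (i + 1) • p (i + 1) := rfl

omit [CharZero K] in
theorem expNegNu_apply (N : V →ₗ[K] V) (m : ℕ) (hm : N ^ m = 0) (v : V) (i : ℕ) :
    expNegNu N m hm v i = ((-1 : K) ^ i / i.factorial) • (N ^ i) v := rfl

omit [CharZero K] in
theorem expNegNu_apply_zero (N : V →ₗ[K] V) (m : ℕ) (hm : N ^ m = 0) (v : V) :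
    expNegNu N m hm v 0 = v := by
  simp [expNegNu_apply]

theorem polyD_apply_eq_iff (N : V →ₗ[K] V) (p : ℕ →₀ V) (i : ℕ) (w : V) :
    polyD N p i = w ↔ p (i + 1) = ((i + 1 : ℕ) : K)⁻¹ • (w - N (p i)) := by
  rw [eq_inv_smul_iff₀ (Nat.cast_ne_zero.mpr i.succ_ne_zero), Nat.cast_smul_eq_nsmul,
    eq_sub_iff_add_eq', polyD_apply]

theorem eq_of_polyD_eq_of_apply_zero_eq {N : V →ₗ[K] V} {p p' : ℕ →₀ V}
    (h : polyD N p = polyD N p') (h0 : p 0 = p' 0) : p = p' := by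
  ext i
  induction i with
  | zero => exact h0
  | succ i ih =>
    rw [(polyD_apply_eq_iff N p i _).mp rfl, (polyD_apply_eq_iff N p' i _).mp rfl, h, ih]

theorem neg_one_pow_div_factorial_succ {F : Type*} [Field F] [CharZero F] (i : ℕ) :
    (-1 : F) ^ (i + 1) / (i + 1).factorial = ((i + 1 : ℕ) : F)⁻¹ * -((-1) ^ i / i.factorial) := by
  rw [Nat.factorial_succ, Nat.cast_mul]
  field_simp
  ring

theorem polyD_expNegNu (N : V →ₗ[K] V) (m : ℕ) (hm : N ^ m = 0) (v : V) :
    polyD N (expNegNu N m hm v) = 0 := by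
  ext i
  rw [Finsupp.coe_zero, Pi.zero_apply, polyD_apply_eq_iff, expNegNu_apply, expNegNu_apply,
    neg_one_pow_div_factorial_succ, pow_succ', Module.End.mul_apply, map_smul, zero_sub,
    ← neg_smul, smul_smul]

/-- The coefficients of the solution of `D p = q` with `p 0 = 0`. -/
noncomputable def polyDPreimage (N : V →ₗ[K] V) (q : ℕ →₀ V) : ℕ → V
  | 0 => 0
  | i + 1 => ((i + 1 : ℕ) : K)⁻¹ • (q i - N (polyDPreimage N q i))

omit [CharZero K] in
theorem exists_polyDPreimage_add_eq_smul (N : V →ₗ[K] V) {q : ℕ →₀ V} {d : ℕ}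
    (hd : ∀ j, d ≤ j → q j = 0) (k : ℕ) :
    ∃ c : K, polyDPreimage N q (d + k) = c • (N ^ k) (polyDPreimage N q d) := by
  induction k with
  | zero => exact ⟨1, by simp⟩
  | succ k ih =>
    obtain ⟨c, hc⟩ := ih
    refine ⟨-(((d + k + 1 : ℕ) : K)⁻¹ * c), ?_⟩
    rw [← add_assoc, polyDPreimage, hd _ (Nat.le_add_right d k), hc, pow_succ',
      Module.End.mul_apply, map_smul, zero_sub, smul_neg, smul_smul, neg_smul]

omit [CharZero K] in
theorem polyDPreimage_eventually_eq_zero {N : V →ₗ[K] V} {m : ℕ} (hm : N ^ m = 0)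
    (q : ℕ →₀ V) : ∃ n, ∀ j, n ≤ j → polyDPreimage N q j = 0 := by
  obtain ⟨d, hd⟩ := q.support.exists_nat_subset_range
  have hq : ∀ j, d ≤ j → q j = 0 := fun j hj =>
    Finsupp.notMem_support_iff.mp fun h => (Finset.mem_range.mp (hd h)).not_ge hj
  refine ⟨d + m, fun j hj => ?_⟩
  obtain ⟨c, hc⟩ := exists_polyDPreimage_add_eq_smul N hq (j - d)
  rw [Nat.add_sub_cancel' (by omega), pow_eq_zero_of_le (by omega) hm, LinearMap.zero_apply,
    smul_zero] at hc
  exact hc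

theorem polyD_surjective {N : V →ₗ[K] V} {m : ℕ} (hm : N ^ m = 0) :
    Function.Surjective (polyD N) := by
  intro q
  obtain ⟨n, hn⟩ := polyDPreimage_eventually_eq_zero hm q
  refine ⟨Finsupp.onFinset (Finset.range n) (polyDPreimage N q) fun j hj =>
    Finset.mem_range.mpr (not_le.mp fun h => hj (hn j h)), ?_⟩
  ext i
  rw [polyD_apply_eq_iff]
  rfl

/-- For `K` of characteristic zero and `N` nilpotent (`N^m = 0`), the sequence
`0 → V → V[u] → V[u] → 0` is exact, where the first map is
`v ↦ exp(−Nu)·v` and the second is `D`: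
`D` is surjective, `v ↦ exp(−Nu)·v` is injective, and the kernel of `D` is
exactly the image of `v ↦ exp(−Nu)·v`. -/
theorem stmt_6 (N : V →ₗ[K] V) (m : ℕ) (hm : N ^ m = 0) :
    Function.Surjective (polyD N) ∧
    Function.Injective (expNegNu N m hm) ∧
    (∀ p : ℕ →₀ V, polyD N p = 0 ↔ ∃ v : V, p = expNegNu N m hm v) := by
  refine ⟨polyD_surjective hm, ?_, fun p => ⟨fun hp => ⟨p 0, ?_⟩, ?_⟩⟩
  · exact Function.LeftInverse.injective (g := fun p : ℕ →₀ V => p 0) (expNegNu_apply_zero N m hm)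
  · exact eq_of_polyD_eq_of_apply_zero_eq (hp.trans (polyD_expNegNu N m hm _).symm)
      (expNegNu_apply_zero N m hm _).symm
  · rintro ⟨v, rfl⟩
    exact polyD_expNegNu N m hm v
end

section
/- Let K be a field, B a commutative K-algebra equipped with a decreasing filtration by ideals B = F^0 ⊇ F^1 ⊇ F^2 ⊇ ⋯ (with the convention F^s = B for s ≤ 0). Fix r ∈ ℤ and let M^0 → M^1 → ⋯ → M^d be a cochain complex of K-vector spaces with differentials d^j : M^j → M^{j+1}. Form the cochain complex C with C^j = M^j ⊗_K (B/F^{r-j}) and differential the composite M^j ⊗ B/F^{r-j} → M^j ⊗ B/F^{r-j-1} → M^{j+1} ⊗ B/F^{r-j-1} (projection followed by d^j ⊗ id). Then for every j there is a natural short exact sequence of K-vector spaces: 0 → (M^j / im d^{j-1}) ⊗_K (F^{r-j-1}/F^{r-j}) → H^j(C) → H^j(M^•) ⊗_K (B/F^{r-j-1}) → 0. -/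
open TensorProduct

section

variable (K : Type) [Field K]

/-- Cohomology of a complex of `K`-vector spaces at the middle of two
consecutive differentials `f`, `g`: `ker g ⧸ im f`. -/
abbrev midHomology {A B C : Type} [AddCommGroup A] [Module K A]
    [AddCommGroup B] [Module K B] [AddCommGroup C] [Module K C]
    (f : A →ₗ[K] B) (g : B →ₗ[K] C) : Type :=
  ↥(LinearMap.ker g) ⧸ ((LinearMap.range f).comap (LinearMap.ker g).subtype)

variable {B : Type} [CommRing B] [Algebra K B]

/-- The quotient `B/I` of a `K`-algebra `B` by an ideal `I`, viewed as a
`K`-vector space. -/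
abbrev idealQuot (I : Ideal B) : Type := B ⧸ (I.restrictScalars K)

/-- The canonical projection `B/I → B/I'` for `I ≤ I'`, as a `K`-linear map. -/
noncomputable def idealQuotProj (I I' : Ideal B) (h : I ≤ I') :
    idealQuot K I →ₗ[K] idealQuot K I' :=
  Submodule.mapQ _ _ LinearMap.id (by simpa using h)

/-- The subquotient `I'/I` (for `I ≤ I'`) as a `K`-vector space. -/
abbrev idealSubquot (I I' : Ideal B) : Type :=
  ↥(I'.restrictScalars K) ⧸
    ((I.restrictScalars K).comap (I'.restrictScalars K).subtype)

end

/-! Write `Q = B/F^{r-j}`, `Q' = B/F^{r-j-1}` and `S = F^{r-j-1}/F^{r-j}`, so that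
`0 → S →α Q →π Q' → 0` is exact. Since `d₁ ∘ d₀ = 0`, `d₁` factors through
`d̄₁ : M₁ / im d₀ → M₂` and `d₁ ⊗ π` through `d̄₁ ⊗ π` on `(M₁ / im d₀) ⊗ Q`; as `B/F^{r-j+1} → Q`
is onto, the image of the incoming differential is exactly the kernel of
`M₁ ⊗ Q → (M₁ / im d₀) ⊗ Q`. This identifies `H^j(C)` with `ker (d̄₁ ⊗ π)` and `H^j(M)` with
`ker d̄₁`. Writing `d̄₁ ⊗ π = (d̄₁ ⊗ Q') ∘ (id ⊗ π)`, the kernel of `d̄₁ ⊗ π` is the preimage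
under the surjection `id ⊗ π` of `ker (d̄₁ ⊗ Q') = ker d̄₁ ⊗ Q'`, and `id ⊗ α` embeds
`(M₁ / im d₀) ⊗ S` as `ker (id ⊗ π)` (flatness over a field). -/

open LinearMap Function

section ShortExact

variable (R : Type*) [Ring R] (X Y Z : Type*) [AddCommGroup X] [Module R X]
  [AddCommGroup Y] [Module R Y] [AddCommGroup Z] [Module R Z]

def HasShortExactSequence : Prop :=
  ∃ (f : X →ₗ[R] Y) (g : Y →ₗ[R] Z), Injective f ∧ Exact f g ∧ Surjective g

variable {R X Y Z}

theorem HasShortExactSequence.congr {X' Y' Z' : Type*} [AddCommGroup X'] [Module R X']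
    [AddCommGroup Y'] [Module R Y'] [AddCommGroup Z'] [Module R Z']
    (h : HasShortExactSequence R X Y Z) (eX : X ≃ₗ[R] X') (eY : Y ≃ₗ[R] Y') (eZ : Z ≃ₗ[R] Z') :
    HasShortExactSequence R X' Y' Z' := by
  obtain ⟨f, g, hf, hfg, hg⟩ := h
  refine ⟨eY ∘ₗ f ∘ₗ eX.symm, eZ ∘ₗ g ∘ₗ eY.symm, ?_, ?_, ?_⟩
  · simpa using hf
  · rwa [← LinearMap.comp_assoc, LinearEquiv.postcomp_exact_iff_exact,
      LinearEquiv.precomp_exact_iff_exact, LinearEquiv.conj_exact_iff_exact]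
  · simpa using hg

/-- The maps are `i` and the restriction `g⁻¹(N) → N` of `g`. -/
theorem hasShortExactSequence_comap {V W : Type*} [AddCommGroup V] [Module R V]
    [AddCommGroup W] [Module R W] {i : X →ₗ[R] V} {g : V →ₗ[R] W} (hi : Injective i)
    (hig : Exact i g) (hg : Surjective g) (N : Submodule R W) :
    HasShortExactSequence R X (N.comap g) N := by
  refine ⟨i.codRestrict _ fun x ↦ ?_, g.restrict fun _ ↦ id, ?_, ?_, ?_⟩
  · simp [hig.apply_apply_eq_zero]
  · exact fun x y h ↦ hi (congrArg Subtype.val h)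
  · intro x
    simp [Subtype.ext_iff, hig x]
  · rintro ⟨w, hw⟩
    obtain ⟨v, rfl⟩ := hg w
    exact ⟨⟨v, hw⟩, rfl⟩

end ShortExact

section Tensor

variable {R : Type*} [CommRing R] {C D S Q Q' : Type*} [AddCommGroup C] [Module R C]
  [AddCommGroup D] [Module R D] [AddCommGroup S] [Module R S] [AddCommGroup Q] [Module R Q]
  [AddCommGroup Q'] [Module R Q'] [Module.Flat R Q']

variable (Q') in
noncomputable def LinearMap.kerTensorEquiv (f : C →ₗ[R] D) :
    ker f ⊗[R] Q' ≃ₗ[R] ker (rTensor Q' f) :=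
  (LinearEquiv.ofInjective _ (Module.Flat.rTensor_preserves_injective_linearMap _
      (ker f).injective_subtype)).trans
    (LinearEquiv.ofEq _ _
      (Module.Flat.rTensor_exact Q' (exact_subtype_ker_map f)).linearMap_ker_eq.symm)

theorem hasShortExactSequence_ker_map [Module.Flat R C] (f : C →ₗ[R] D) {α : S →ₗ[R] Q}
    {π : Q →ₗ[R] Q'} (hα : Injective α) (hαπ : Exact α π) (hπ : Surjective π) :
    HasShortExactSequence R (C ⊗[R] S) (ker (map f π)) (ker f ⊗[R] Q') :=
  (hasShortExactSequence_comap (Module.Flat.lTensor_preserves_injective_linearMap α hα)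
      (lTensor_exact C hαπ hπ) (lTensor_surjective C hπ) (ker (rTensor Q' f))).congr
    (LinearEquiv.refl R _) (LinearEquiv.ofEq _ _ (by rw [← ker_comp, rTensor_comp_lTensor]))
    (f.kerTensorEquiv Q').symm

end Tensor

section Homology

variable {K : Type} [Field K] {A V W C : Type} [AddCommGroup A] [Module K A]
  [AddCommGroup V] [Module K V] [AddCommGroup W] [Module K W] [AddCommGroup C] [Module K C]

noncomputable def midHomologyEquivKer {f : A →ₗ[K] V} {g : V →ₗ[K] C} {q : V →ₗ[K] W}
    (hq : Surjective q) (hfq : Exact f q) (g' : W →ₗ[K] C) (hg : g' ∘ₗ q = g) :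
    midHomology K f g ≃ₗ[K] ker g' :=
  let φ : ker g →ₗ[K] ker g' := q.restrict fun x hx ↦ by simpa [← hg] using hx
  have hφ : Surjective φ := by
    rintro ⟨w, hw⟩
    obtain ⟨v, rfl⟩ := hq w
    exact ⟨⟨v, by simpa [← hg] using hw⟩, rfl⟩
  (Submodule.quotEquivOfEq _ _ (by rw [ker_restrict, hfq.linearMap_ker_eq])).trans
    (φ.quotKerEquivOfSurjective hφ)

variable {M₀ M₁ M₂ Q₀ Q S Q' : Type}
  [AddCommGroup M₀] [Module K M₀] [AddCommGroup M₁] [Module K M₁]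
  [AddCommGroup M₂] [Module K M₂] [AddCommGroup Q₀] [Module K Q₀]
  [AddCommGroup Q] [Module K Q] [AddCommGroup S] [Module K S] [AddCommGroup Q'] [Module K Q']

theorem hasShortExactSequence_midHomology_map (d₀ : M₀ →ₗ[K] M₁) (d₁ : M₁ →ₗ[K] M₂)
    (hd : d₁ ∘ₗ d₀ = 0) {P₀ : Q₀ →ₗ[K] Q} (hP₀ : Surjective P₀) {α : S →ₗ[K] Q}
    {π : Q →ₗ[K] Q'} (hα : Injective α) (hαπ : Exact α π) (hπ : Surjective π) :
    HasShortExactSequence K ((M₁ ⧸ range d₀) ⊗[K] S)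
      (midHomology K (map d₀ P₀) (map d₁ π)) (midHomology K d₀ d₁ ⊗[K] Q') := by
  let d₁' : M₁ ⧸ range d₀ →ₗ[K] M₂ := (range d₀).liftQ d₁ (range_le_ker_iff.2 hd)
  have hd₁' : d₁' ∘ₗ (range d₀).mkQ = d₁ := (range d₀).liftQ_mkQ _ _
  have hexact : Exact (map d₀ P₀) (rTensor Q (range d₀).mkQ) := by
    rw [← rTensor_comp_lTensor, (lTensor_surjective M₀ hP₀).comp_exact_iff_exact]
    exact rTensor_exact Q (exact_map_mkQ_range d₀) (Submodule.mkQ_surjective _)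
  have hfactor : map d₁' π ∘ₗ rTensor Q (range d₀).mkQ = map d₁ π := by
    rw [map_comp_rTensor, hd₁']
  exact (hasShortExactSequence_ker_map d₁' hα hαπ hπ).congr (LinearEquiv.refl K _)
    (midHomologyEquivKer (rTensor_surjective Q (Submodule.mkQ_surjective _)) hexact _
      hfactor).symm
    (LinearEquiv.rTensor Q'
      (midHomologyEquivKer (Submodule.mkQ_surjective _) (exact_map_mkQ_range d₀) _ hd₁').symm)

end Homology

namespace Submodule

variable {R M : Type*} [Ring R] [AddCommGroup M] [Module R M] {p p' : Submodule R M}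

theorem mapQ_subtype_injective :
    Injective ((p.comap p'.subtype).mapQ p p'.subtype le_rfl) :=
  ker_eq_bot.1 (by rw [ker_mapQ, mkQ_map_self])

theorem exact_mapQ_subtype_factor (h : p ≤ p') :
    Exact ((p.comap p'.subtype).mapQ p p'.subtype le_rfl) (factor h) := by
  rw [exact_iff, ker_mapQ, range_mapQ, range_subtype, comap_id]

end Submodule

/-- Computation of the cohomology of the filtered complex
`C^j = M^j ⊗_K B/F^{r-j}` with differential
`M^j ⊗ B/F^{r-j} → M^j ⊗ B/F^{r-j-1} → M^{j+1} ⊗ B/F^{r-j-1}` (projection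
followed by `d^j ⊗ id`), encoded at a fixed spot `j` by the three consecutive
terms with differentials `d₀ : M₀ → M₁`, `d₁ : M₁ → M₂` (`d₁ ∘ d₀ = 0`) of the
underlying complex: there is a short exact sequence
`0 → (M^j/im d^{j-1}) ⊗ (F^{r-j-1}/F^{r-j}) → H^j(C) → H^j(M^•) ⊗ B/F^{r-j-1} → 0`.
Here `F` is a decreasing filtration of `B` by ideals with `F^s = B` for
`s ≤ 0`. -/
theorem stmt_9 {K : Type} [Field K] {B : Type} [CommRing B] [Algebra K B]
    (F : ℤ → Ideal B) (hdec : ∀ s : ℤ, F (s + 1) ≤ F s)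
    (r j : ℤ)
    {M₀ M₁ M₂ : Type} [AddCommGroup M₀] [Module K M₀]
    [AddCommGroup M₁] [Module K M₁] [AddCommGroup M₂] [Module K M₂]
    (d₀ : M₀ →ₗ[K] M₁) (d₁ : M₁ →ₗ[K] M₂) (hd : d₁ ∘ₗ d₀ = 0)
    -- the two differentials of the filtered complex `C` around spot `j`:
    (δ₀ : (M₀ ⊗[K] idealQuot K (F (r - j + 1))) →ₗ[K]
          (M₁ ⊗[K] idealQuot K (F (r - j))))
    (δ₁ : (M₁ ⊗[K] idealQuot K (F (r - j))) →ₗ[K]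
          (M₂ ⊗[K] idealQuot K (F (r - j - 1)))) 
    (hδ₀ : δ₀ = TensorProduct.map d₀
      (idealQuotProj K (F (r - j + 1)) (F (r - j))
        (by simpa using hdec (r - j))))
    (hδ₁ : δ₁ = TensorProduct.map d₁
      (idealQuotProj K (F (r - j)) (F (r - j - 1))
        (by simpa [show r - j - 1 + 1 = r - j by ring] using hdec (r - j - 1)))) :
    ∃ (ι : ((M₁ ⧸ LinearMap.range d₀) ⊗[K]
              idealSubquot K (F (r - j)) (F (r - j - 1))) →ₗ[K]
            midHomology K δ₀ δ₁)
      (p : midHomology K δ₀ δ₁ →ₗ[K]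
            (midHomology K d₀ d₁ ⊗[K] idealQuot K (F (r - j - 1)))),
      Function.Injective ι ∧
      LinearMap.range ι = LinearMap.ker p ∧
      Function.Surjective p := by
  have h₀ : F (r - j + 1) ≤ F (r - j) := by simpa using hdec (r - j)
  have h₁ : F (r - j) ≤ F (r - j - 1) := by simpa using hdec (r - j - 1)
  subst hδ₀ hδ₁
  obtain ⟨ι, p, hι, hιp, hp⟩ := hasShortExactSequence_midHomology_map d₀ d₁ hd
    (Submodule.factor_surjective (Submodule.restrictScalars_mono K h₀))
    Submodule.mapQ_subtype_injective
    (Submodule.exact_mapQ_subtype_factor (Submodule.restrictScalars_mono K h₁))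
    (Submodule.factor_surjective _)
  exact ⟨ι, p, hι, hιp.linearMap_ker_eq.symm, hp⟩
end

section
/- Let K be a field complete with respect to a nonarchimedean absolute value |·|. Let O be the K-vector space of sequences (b_n)_{n≥0} in K such that |b_n| r^n → 0 as n → ∞ for every real r > 0, and let T be the K-vector space of sequences (a_n)_{n≥1} in K such that there exists ρ > 0 with |a_n| ρ^n → 0 as n → ∞. Then: (1) for every a ∈ T and b ∈ O the series ⟨a, b⟩ := ∑_{n≥0} a_{n+1} b_n converges in K; (2) the resulting K-bilinear pairing T × O → K is nondegenerate, i.e., if ⟨a, b⟩ = 0 for all b ∈ O then a = 0, and if ⟨a, b⟩ = 0 for all a ∈ T then b = 0. -/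
open Filter

/-- Coefficients of entire functions on the rigid affine line:
`b ∈ O` iff `‖b n‖ r^n → 0` for every `r > 0`. -/
def entireCoeffs (K : Type*) [NormedField K] : Set (ℕ → K) :=
  {b | ∀ r : ℝ, 0 < r → Tendsto (fun n => ‖b n‖ * r ^ n) atTop (nhds 0)}

/-- Coefficients of elements of `H^1_c(𝔸^1, O)`: sequences `(a_n)` (here `a n`
stands for the coefficient `a_{n+1}` of `x^{-(n+1)}`) such that
`‖a_n‖ ρ^n → 0` for some `ρ > 0`. -/
def boundaryCoeffs (K : Type*) [NormedField K] : Set (ℕ → K) :=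
  {a | ∃ ρ : ℝ, 0 < ρ ∧ Tendsto (fun n => ‖a n‖ * ρ ^ n) atTop (nhds 0)}

/-! Convergence: `‖a n * b n‖ = (‖a n‖ ρ ^ n) (‖b n‖ ρ⁻¹ ^ n) → 0`, and over a complete
nonarchimedean field a series converges as soon as its terms tend to zero. Nondegeneracy:
the unit sequences `Pi.single m 1` lie in both spaces and pair with a sequence to its `m`-th
coefficient. -/

lemma summable_of_tendsto_norm_zero {E : Type*} [NormedAddCommGroup E] [CompleteSpace E]
    (hna : IsNonarchimedean (‖·‖ : E → ℝ)) {f : ℕ → E}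
    (hf : Tendsto (fun n => ‖f n‖) atTop (nhds 0)) : Summable f :=
  have := IsUltrametricDist.isUltrametricDist_of_isNonarchimedean_norm hna
  NonarchimedeanAddGroup.summable_of_tendsto_cofinite_zero <| by
    rwa [Nat.cofinite_eq_atTop, tendsto_zero_iff_norm_tendsto_zero]

section

variable {K : Type*} [NormedField K]

lemma mem_entireCoeffs_of_eventually_eq_zero {b : ℕ → K} (hb : ∀ᶠ n in atTop, b n = 0) :
    b ∈ entireCoeffs K := fun _ _ =>
  tendsto_const_nhds.congr' <| hb.mono fun n hn => by simp [hn]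

lemma mem_boundaryCoeffs_of_eventually_eq_zero {a : ℕ → K} (ha : ∀ᶠ n in atTop, a n = 0) :
    a ∈ boundaryCoeffs K :=
  ⟨1, one_pos, tendsto_const_nhds.congr' <| ha.mono fun n hn => by simp [hn]⟩

lemma eventually_single_eq_zero (m : ℕ) (c : K) :
    ∀ᶠ n in atTop, (Pi.single m c : ℕ → K) n = 0 :=
  (eventually_gt_atTop m).mono fun _ hn => Pi.single_eq_of_ne hn.ne' _

lemma tendsto_norm_mul_of_mem_boundaryCoeffs_of_mem_entireCoeffs {a b : ℕ → K}
    (ha : a ∈ boundaryCoeffs K) (hb : b ∈ entireCoeffs K) :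
    Tendsto (fun n => ‖a n * b n‖) atTop (nhds 0) := by
  obtain ⟨ρ, hρ, ha⟩ := ha
  have h := ha.mul (hb ρ⁻¹ (inv_pos.mpr hρ))
  rw [mul_zero] at h
  refine h.congr fun n => ?_
  rw [norm_mul, inv_pow, mul_mul_mul_comm, mul_inv_cancel₀ (pow_ne_zero n hρ.ne'), mul_one]

lemma tsum_mul_single_one (a : ℕ → K) (m : ℕ) :
    ∑' n, a n * (Pi.single m 1 : ℕ → K) n = a m := by
  simp [Pi.single_apply]

lemma tsum_single_one_mul (b : ℕ → K) (m : ℕ) :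
    ∑' n, (Pi.single m 1 : ℕ → K) n * b n = b m := by
  simp [Pi.single_apply]

end

/-- The residue pairing `⟨a, b⟩ = ∑_{n≥0} a_{n+1} b_n` between `T` and `O`
converges and is nondegenerate on both sides. -/
theorem stmt_12 (K : Type*) [NormedField K] [CompleteSpace K]
    (hna : IsNonarchimedean (fun x : K => ‖x‖)) :
    (∀ a ∈ boundaryCoeffs K, ∀ b ∈ entireCoeffs K,
        Summable (fun n => a n * b n)) ∧
    (∀ a ∈ boundaryCoeffs K,
        (∀ b ∈ entireCoeffs K, (∑' n, a n * b n) = 0) → a = 0) ∧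
    (∀ b ∈ entireCoeffs K,
        (∀ a ∈ boundaryCoeffs K, (∑' n, a n * b n) = 0) → b = 0) := by
  refine ⟨fun a ha b hb => summable_of_tendsto_norm_zero hna
      (tendsto_norm_mul_of_mem_boundaryCoeffs_of_mem_entireCoeffs ha hb),
    fun a _ h => funext fun m => ?_, fun b _ h => funext fun m => ?_⟩
  · rw [← tsum_mul_single_one a m]
    exact h _ (mem_entireCoeffs_of_eventually_eq_zero (eventually_single_eq_zero m 1))
  · rw [← tsum_single_one_mul b m]
    exact h _ (mem_boundaryCoeffs_of_eventually_eq_zero (eventually_single_eq_zero m 1))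
end
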